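/- Let c > 0, α, δ ∈ (0,1), ρ = (4/(e c)) α log(δ⁻¹) > 0, and let τ ≥ 1 satisfy τ log τ = ρ. Set κ = log(e c / 4) and, for q ≥ 0, set η = q + τ e c / 4. Then e^{η(log η - κ)} ≤ (4η/c)^q · δ^{-α}. -/

import Mathlib

open Real

/-! With `A = e c / 4` and `η = q + τ A`, both sides are exponentials and, using
`α log δ⁻¹ = A τ log τ`, the claim reduces to `τ A log η ≤ τ A log (τ A) + (η - τ A)`:
the tangent-line bound `log x ≤ x - 1` at `x = η / (τ A)`. -/

lemma Real.mul_log_le_mul_log_add_sub {x y : ℝ} (hx : 0 < x) (hy : 0 < y) :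
    x * log y ≤ x * log x + (y - x) := by
  have h := mul_le_mul_of_nonneg_left (log_le_sub_one_of_pos (div_pos hy hx)) hx.le
  rw [log_div hy.ne' hx.ne'] at h
  calc x * log y = x * (log y - log x) + x * log x := by ring
    _ ≤ x * (y / x - 1) + x * log x := by linarith
    _ = x * log x + (y - x) := by field_simp; ring

theorem lemma_5_2_general (c α δ τ q : ℝ) (hc : 0 < c)
    (hδ : δ ∈ Set.Ioo (0:ℝ) 1) (hτ : 1 ≤ τ)
    (heq : τ * Real.log τ = 4 / (Real.exp 1 * c) * α * Real.log δ⁻¹)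
    (hq : 0 ≤ q) :
    Real.exp ((q + τ * Real.exp 1 * c / 4) *
        (Real.log (q + τ * Real.exp 1 * c / 4) - Real.log (Real.exp 1 * c / 4))) ≤
      (4 * (q + τ * Real.exp 1 * c / 4) / c) ^ q * δ ^ (-α) := by
  set A := exp 1 * c / 4 with hA
  have hA0 : 0 < A := by positivity
  have hτ0 : 0 < τ := one_pos.trans_le hτ
  have hη : q + τ * exp 1 * c / 4 = q + τ * A := by ring
  rw [hη]
  have hη0 : 0 < q + τ * A := by positivity
  have hlog_base : log (4 * (q + τ * A) / c) = 1 + (log (q + τ * A) - log A) := by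
    rw [show 4 * (q + τ * A) / c = exp 1 * ((q + τ * A) / A) by rw [hA]; field_simp,
      log_mul (exp_pos 1).ne' (div_pos hη0 hA0).ne', log_exp, log_div hη0.ne' hA0.ne']
  have hlog_δ : -α * log δ = A * (τ * log τ) := by
    rw [heq, log_inv, hA]; field_simp
  rw [rpow_def_of_pos (by positivity), rpow_def_of_pos hδ.1, ← exp_add, exp_le_exp,
    hlog_base, mul_comm (log δ), hlog_δ]
  have key := mul_log_le_mul_log_add_sub (mul_pos hτ0 hA0) hη0
  rw [log_mul hτ0.ne' hA0.ne'] at key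
  linear_combination key

theorem lemma_5_2 (c α δ τ q : ℝ) (hc : 0 < c) (hα : α ∈ Set.Ioo (0:ℝ) 1)
    (hδ : δ ∈ Set.Ioo (0:ℝ) 1) (hτ : 1 ≤ τ)
    (heq : τ * Real.log τ = 4 / (Real.exp 1 * c) * α * Real.log δ⁻¹)
    (hq : 0 ≤ q) :
    Real.exp ((q + τ * Real.exp 1 * c / 4) *
        (Real.log (q + τ * Real.exp 1 * c / 4) - Real.log (Real.exp 1 * c / 4))) ≤
      (4 * (q + τ * Real.exp 1 * c / 4) / c) ^ q * δ ^ (-α) :=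
  lemma_5_2_general c α δ τ q hc hδ hτ heq hq
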